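/- arXiv:2204.06379 — 3 statements merged into one kernel-verified Lean document; each statement's English description precedes it below -/
import Mathlib

section
/- The image of the group Γ(2) in PSL₂(ℤ) is a free group of rank 2, freely generated by the images A of the matrix [[1,2],[0,1]] and B of the matrix [[1,0],[2,1]]. -/
open Matrix

local notation "SL2Z" => Matrix.SpecialLinearGroup (Fin 2) ℤ

/-!
Freeness is a ping-pong argument on the projective line `ℙ¹(ℚ)`, on which `PSL₂(ℤ)` acts.
The nonzero powers of `A` send the points `[x : y]` with `|x| < |y|` into those with
`|y| < |x|`, and the nonzero powers of `B` do the reverse, so no nontrivial reduced word in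
`A` and `B` acts trivially.

That `A`, `B` and `-1` generate `Γ(2)` is a Euclidean descent on the lower-left entry `c`:
left multiplication by powers of `A` and then of `B` replaces `c` by an entry of smaller
absolute value, the parities of the entries of elements of `Γ(2)` making the inequalities
strict. When `c = 0` the element is `±Aᵏ`, and `-1` vanishes in `PSL₂(ℤ)`.
-/

open scoped LinearAlgebra.Projectivization MatrixGroups Pointwise Function

theorem FreeGroup.lift_injective_of_ping_pong {ι : Type*} [Nontrivial ι] {G : Type*} [Group G]
    {α : Type*} [MulAction G α] (a : ι → G) (X : ι → Set α) (hX : ∀ i, (X i).Nonempty)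
    (hXdisj : Pairwise (Disjoint on X))
    (hpp : ∀ i j, i ≠ j → ∀ n : ℤ, n ≠ 0 → a i ^ n • X j ⊆ X i) :
    Function.Injective (FreeGroup.lift a) := by
  -- `FreeGroup ι` is the free product of copies of `FreeGroup Unit ≃ ℤ`, whose factors are
  -- infinite, so Mathlib's ping-pong lemma for free products applies.
  have hlift : FreeGroup.lift a =
      (Monoid.CoprodI.lift fun i => FreeGroup.lift fun _ : Unit => a i).comp
        freeGroupEquivCoprodI.toMonoidHom := by
    ext i
    simp
  rw [hlift, MonoidHom.coe_comp]
  refine Function.Injective.comp ?_ freeGroupEquivCoprodI.injective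
  refine Monoid.CoprodI.lift_injective_of_ping_pong _ ?_ X hX hXdisj fun i j hij => ?_
  · refine Or.inr ⟨Classical.arbitrary ι, ?_⟩
    rw [FreeGroup.freeGroupUnitEquivInt.cardinal_eq, Cardinal.mk_denumerable]
    exact Cardinal.natCast_lt_aleph0.le
  · refine FreeGroup.freeGroupUnitEquivInt.symm.forall_congr_right.mp fun n hn => ?_
    simp only [FreeGroup.freeGroupUnitEquivInt, Equiv.coe_fn_symm_mk, map_zpow,
      FreeGroup.lift_apply_of]
    exact hpp i j hij n (by rintro rfl; exact hn rfl)

namespace Matrix.SpecialLinearGroup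

variable {ι R S : Type*} [DecidableEq ι] [Fintype ι] [CommRing R] [CommRing S]

lemma transvection_zpow {i j : ι} (hij : i ≠ j) (b : R) (n : ℤ) :
    transvection hij b ^ n = transvection hij (n * b) := by
  induction n using Int.induction_on with
  | zero => simp
  | succ k ih => rw [_root_.zpow_add_one, ih, ← transvection_add]; push_cast; ring_nf
  | pred k ih =>
    rw [_root_.zpow_sub_one, ih, transvection_inv, ← transvection_add]; push_cast; ring_nf

lemma transvection_mul_apply_same {i j : ι} (hij : i ≠ j) (b : R) (g : SpecialLinearGroup ι R)
    (l : ι) : (transvection hij b * g) i l = g i l + b * g j l :=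
  Matrix.transvection_mul_apply_same i j l b g

lemma transvection_mul_apply_of_ne {i j k : ι} (hij : i ≠ j) (hki : k ≠ i) (b : R)
    (g : SpecialLinearGroup ι R) (l : ι) : (transvection hij b * g) k l = g k l :=
  Matrix.transvection_mul_apply_of_ne i j k l hki b g

lemma transvection_smul {i j : ι} (hij : i ≠ j) (b : R) (v : ι → R) :
    transvection hij b • v = v + Pi.single i (b * v j) := by
  ext k
  simp [SpecialLinearGroup.smul_def, transvection_coe, add_mulVec, single_mulVec_eq,
    Pi.single_apply]

lemma map_transvection (f : R →+* S) {i j : ι} (hij : i ≠ j) (b : R) :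
    map f (transvection hij b) = transvection hij (f b) := by
  ext k l
  simp only [map_apply_coe, RingHom.mapMatrix_apply, transvection_coe, map_apply, add_apply,
    one_apply, single_apply]
  split_ifs <;> simp_all

lemma map_mem_center (f : R →+* S) {g : SpecialLinearGroup ι R}
    (hg : g ∈ Subgroup.center (SpecialLinearGroup ι R)) :
    map f g ∈ Subgroup.center (SpecialLinearGroup ι S) := by
  obtain ⟨r, hr, hrg⟩ := mem_center_iff.mp hg
  refine mem_center_iff.mpr ⟨f r, by rw [← map_pow, hr, map_one], ?_⟩
  ext k l
  simp only [← hrg, map_apply_coe, RingHom.mapMatrix_apply, map_apply, scalar_apply,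
    diagonal_apply]
  split_ifs <;> simp

end Matrix.SpecialLinearGroup

namespace Matrix.ProjectiveSpecialLinearGroup

variable {ι R S : Type*} [DecidableEq ι] [Fintype ι] [CommRing R] [CommRing S]

def map (f : R →+* S) : ProjectiveSpecialLinearGroup ι R →* ProjectiveSpecialLinearGroup ι S :=
  QuotientGroup.map _ _ (SpecialLinearGroup.map f) fun _ hg =>
    SpecialLinearGroup.map_mem_center f hg

instance {K : Type*} [Field K] [Algebra R K] :
    MulAction (ProjectiveSpecialLinearGroup ι R) (ℙ K (ι → K)) :=
  MulAction.compHom _ (map (algebraMap R K))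

lemma coe_smul_mk {K : Type*} [Field K] [Algebra R K] (g : SpecialLinearGroup ι R) {v : ι → K}
    (hv : v ≠ 0) :
    (g : ProjectiveSpecialLinearGroup ι R) • Projectivization.mk K v hv =
      Projectivization.mk K (SpecialLinearGroup.map (algebraMap R K) g • v)
        ((smul_ne_zero_iff_ne _).mpr hv) :=
  rfl

end Matrix.ProjectiveSpecialLinearGroup

namespace Projectivization

variable {ι K : Type*} [Field K] [LinearOrder K] [IsStrictOrderedRing K]

def absCoordLt (i j : ι) : Set (ℙ K (ι → K)) :=
  {p | p.lift (fun v : {v : ι → K // v ≠ 0} => |v.1 i| < |v.1 j|) <| by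
    rintro ⟨-, ha⟩ ⟨b, -⟩ t rfl
    have ht : t ≠ 0 := by rintro rfl; simp at ha
    simp [abs_mul, mul_lt_mul_iff_right₀ (abs_pos.2 ht)]}

lemma mk_mem_absCoordLt {i j : ι} {v : ι → K} (hv : v ≠ 0) :
    mk K v hv ∈ absCoordLt i j ↔ |v i| < |v j| :=
  Iff.rfl

lemma disjoint_absCoordLt (i j : ι) : Disjoint (absCoordLt (K := K) i j) (absCoordLt j i) := by
  refine Set.disjoint_left.mpr fun p => ?_
  induction p using Projectivization.ind with
  | h v hv => simpa only [mk_mem_absCoordLt] using lt_asymm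

end Projectivization

lemma abs_lt_abs_add_mul {α : Type*} [CommRing α] [LinearOrder α] [IsStrictOrderedRing α]
    {x y c : α} (hxy : |x| < |y|) (hc : 2 ≤ |c|) : |y| < |x + c * y| :=
  calc |y| < 2 * |y| - |x| := by linarith
    _ ≤ |c * y| - |x| := by rw [abs_mul]; gcongr
    _ ≤ |x + c * y| := by simpa [add_comm] using abs_sub_abs_le_abs_add (c * y) x

namespace Matrix.ProjectiveSpecialLinearGroup

open Projectivization

variable {ι : Type*} [DecidableEq ι] [Fintype ι]

lemma transvection_zpow_smul_absCoordLt {K : Type*} [Field K] [LinearOrder K]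
    [IsStrictOrderedRing K] {i j : ι} (hij : i ≠ j) {b : ℤ} (hb : 2 ≤ |b|) {n : ℤ} (hn : n ≠ 0) :
    (SpecialLinearGroup.transvection hij b : ProjectiveSpecialLinearGroup ι ℤ) ^ n •
      absCoordLt (K := K) i j ⊆ absCoordLt j i := by
  refine Set.smul_set_subset_iff.mpr fun p hp => ?_
  induction p using Projectivization.ind with
  | h v hv =>
    rw [← QuotientGroup.mk_zpow, SpecialLinearGroup.transvection_zpow, coe_smul_mk,
      SpecialLinearGroup.map_transvection, mk_mem_absCoordLt,
      SpecialLinearGroup.transvection_smul]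
    rw [mk_mem_absCoordLt] at hp
    have hnb : 2 ≤ |n * b| := by
      rw [abs_mul]
      nlinarith [Int.one_le_abs hn]
    simpa [hij, hij.symm] using
      abs_lt_abs_add_mul hp (c := ((n * b : ℤ) : K)) (by exact_mod_cast hnb)

theorem lift_transvection_injective {b : ℤ} (hb : 2 ≤ |b|) :
    Function.Injective (FreeGroup.lift fun x : Bool =>
      if x then (SpecialLinearGroup.transvection (zero_ne_one' (Fin 2)) b : PSL(2, ℤ))
      else (SpecialLinearGroup.transvection (one_ne_zero' (Fin 2)) b : PSL(2, ℤ))) := by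
  refine FreeGroup.lift_injective_of_ping_pong _
    (fun x : Bool => if x then absCoordLt (K := ℚ) (ι := Fin 2) 1 0 else absCoordLt 0 1)
    ?_ ?_ ?_
  · rintro (_ | _)
    · exact ⟨mk ℚ (Pi.single 1 1) (by simp), by simp [mk_mem_absCoordLt]⟩
    · exact ⟨mk ℚ (Pi.single 0 1) (by simp), by simp [mk_mem_absCoordLt]⟩
  · rintro (_ | _) (_ | _) h
    all_goals first
      | exact absurd rfl h
      | exact disjoint_absCoordLt _ _
  · rintro (_ | _) (_ | _) h n hn
    all_goals first
      | exact absurd rfl h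
      | exact transvection_zpow_smul_absCoordLt _ hb hn

end Matrix.ProjectiveSpecialLinearGroup

lemma Int.exists_abs_sub_two_mul_mul_lt {x y : ℤ} (hy : y ≠ 0) (hxy : Odd (x + y)) :
    ∃ q, |x - 2 * q * y| < |y| := by
  wlog hpos : 0 < y generalizing y
  · obtain ⟨q, hq⟩ := this (neg_ne_zero.mpr hy)
      (by rw [show x + -y = x + y - 2 * y by ring]; exact hxy.sub_even (even_two_mul y))
      (by omega)
    exact ⟨-q, by simpa using hq⟩
  refine ⟨(x + y) / (2 * y), ?_⟩
  have hdiv := Int.mul_ediv_add_emod (x + y) (2 * y)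
  have hr := Int.emod_nonneg (x + y) (by omega : 2 * y ≠ 0)
  have hr' := Int.emod_lt_of_pos (x + y) (by omega : 0 < 2 * y)
  have hr0 : (x + y) % (2 * y) ≠ 0 := by
    intro h0
    rw [← Int.not_even_iff_odd] at hxy
    exact hxy ⟨y * ((x + y) / (2 * y)), by linarith⟩
  rw [abs_of_pos hpos, abs_lt]
  constructor <;> linarith [lt_of_le_of_ne hr (Ne.symm hr0)]

namespace GammaTwo

open CongruenceSubgroup

def A : SL(2, ℤ) := SpecialLinearGroup.transvection (zero_ne_one' (Fin 2)) 2

def B : SL(2, ℤ) := SpecialLinearGroup.transvection (one_ne_zero' (Fin 2)) 2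

lemma coe_A : (A : Matrix (Fin 2) (Fin 2) ℤ) = !![1, 2; 0, 1] := by
  ext i j; fin_cases i <;> fin_cases j <;> simp [A, SpecialLinearGroup.transvection_coe]

lemma coe_B : (B : Matrix (Fin 2) (Fin 2) ℤ) = !![1, 0; 2, 1] := by
  ext i j; fin_cases i <;> fin_cases j <;> simp [B, SpecialLinearGroup.transvection_coe]

lemma coe_A_zpow (k : ℤ) :
    ((A ^ k : SL(2, ℤ)) : Matrix (Fin 2) (Fin 2) ℤ) = !![1, 2 * k; 0, 1] := by
  ext i j
  fin_cases i <;> fin_cases j <;>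
    simp [A, SpecialLinearGroup.transvection_zpow, SpecialLinearGroup.transvection_coe, mul_comm]

lemma mem_Gamma_two_iff {g : SL(2, ℤ)} :
    g ∈ Gamma 2 ↔ Odd (g 0 0) ∧ Even (g 0 1) ∧ Even (g 1 0) ∧ Odd (g 1 1) := by
  simp [ZMod.intCast_eq_one_iff_odd, ZMod.intCast_eq_zero_iff_even]

lemma A_mem_Gamma_two : A ∈ Gamma 2 := by
  rw [mem_Gamma_two_iff]; simp [A, SpecialLinearGroup.transvection_coe]

lemma B_mem_Gamma_two : B ∈ Gamma 2 := by
  rw [mem_Gamma_two_iff]; simp [B, SpecialLinearGroup.transvection_coe]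

lemma mem_closure_of_apply_one_zero_eq_zero {g : SL(2, ℤ)} (hg : g ∈ Gamma 2) (hc : g 1 0 = 0) :
    g ∈ Subgroup.closure {-1, A, B} := by
  obtain ⟨k, hk⟩ := even_iff_two_dvd.mp (mem_Gamma_two_iff.mp hg).2.1
  have had : g 0 0 * g 1 1 = 1 := by
    have hdet := g.det_coe
    rw [det_fin_two, hc] at hdet
    linarith
  have hA : A ∈ Subgroup.closure {-1, A, B} := Subgroup.subset_closure (by simp)
  rcases Int.eq_one_or_neg_one_of_mul_eq_one' had with ⟨ha, hd⟩ | ⟨ha, hd⟩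
  · have hgA : g = A ^ k := by
      ext i j
      fin_cases i <;> fin_cases j <;> simp [coe_A_zpow, ha, hd, hc, hk]
    rw [hgA]
    exact zpow_mem hA k
  · have hgA : g = -1 * A ^ (-k) := by
      ext i j
      fin_cases i <;> fin_cases j <;> simp [coe_A_zpow, ha, hd, hc, hk]
    rw [hgA]
    exact mul_mem (Subgroup.subset_closure (by simp)) (zpow_mem hA _)

lemma exists_zpow_mul_zpow_mul_natAbs_lt {g : SL(2, ℤ)} (hg : g ∈ Gamma 2) (hc : g 1 0 ≠ 0) :
    ∃ q m : ℤ, ((B ^ m * (A ^ q * g) : SL(2, ℤ)) 1 0).natAbs < (g 1 0).natAbs := by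
  obtain ⟨ha, -, hceven, -⟩ := mem_Gamma_two_iff.mp hg
  obtain ⟨q, hq⟩ := Int.exists_abs_sub_two_mul_mul_lt hc (ha.add_even hceven)
  set g₁ := A ^ (-q) * g with hg₁
  have hg₁00 : g₁ 0 0 = g 0 0 - 2 * q * g 1 0 := by
    rw [hg₁, A, SpecialLinearGroup.transvection_zpow,
      SpecialLinearGroup.transvection_mul_apply_same, Int.cast_id]
    ring
  have hg₁10 : g₁ 1 0 = g 1 0 := by
    rw [hg₁, A, SpecialLinearGroup.transvection_zpow,
      SpecialLinearGroup.transvection_mul_apply_of_ne _ one_ne_zero]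
  have ha₁ : Odd (g₁ 0 0) := (mem_Gamma_two_iff.mp (mul_mem (zpow_mem A_mem_Gamma_two _) hg)).1
  obtain ⟨m, hm⟩ := Int.exists_abs_sub_two_mul_mul_lt (y := g₁ 0 0)
    (by rintro h; simp [h] at ha₁) (hceven.add_odd ha₁)
  refine ⟨-q, -m, ?_⟩
  rw [← Int.ofNat_lt, Int.natCast_natAbs, Int.natCast_natAbs, ← hg₁, B,
    SpecialLinearGroup.transvection_zpow, SpecialLinearGroup.transvection_mul_apply_same,
    hg₁10, Int.cast_id]
  rw [hg₁00] at hm ⊢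
  calc _ = |g 1 0 - 2 * m * (g 0 0 - 2 * q * g 1 0)| := by ring_nf
    _ < |g 1 0| := hm.trans hq

theorem Gamma_two_le_closure : Gamma 2 ≤ Subgroup.closure {-1, A, B} := by
  intro g hg
  induction hn : (g 1 0).natAbs using Nat.strong_induction_on generalizing g with
  | _ n ih =>
  by_cases hc : g 1 0 = 0
  · exact mem_closure_of_apply_one_zero_eq_zero hg hc
  obtain ⟨q, m, hlt⟩ := exists_zpow_mul_zpow_mul_natAbs_lt hg hc
  have hmem : B ^ m * (A ^ q * g) ∈ Gamma 2 :=
    mul_mem (zpow_mem B_mem_Gamma_two _) (mul_mem (zpow_mem A_mem_Gamma_two _) hg)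
  have hg_eq : g = A ^ (-q) * (B ^ (-m) * (B ^ m * (A ^ q * g))) := by group
  rw [hg_eq]
  exact mul_mem (zpow_mem (Subgroup.subset_closure (by simp)) _)
    (mul_mem (zpow_mem (Subgroup.subset_closure (by simp)) _) (ih _ (hn ▸ hlt) hmem rfl))

theorem Gamma_two_eq_closure : Gamma 2 = Subgroup.closure {-1, A, B} :=
  le_antisymm Gamma_two_le_closure <| (Subgroup.closure_le _).mpr <| by
    simp only [Set.insert_subset_iff, Set.singleton_subset_iff, SetLike.mem_coe]
    exact ⟨by simp, A_mem_Gamma_two, B_mem_Gamma_two⟩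

end GammaTwo

/-- The image of `Γ(2)` in `PSL₂(ℤ) = SL₂(ℤ)/{±I}` (realized as the quotient of `SL₂(ℤ)` by
its center) is a free group of rank 2, freely generated by the images of
`A = [[1,2],[0,1]]` and `B = [[1,0],[2,1]]`: the homomorphism from the free group on two
generators sending the generators to those images is injective, with range the image of `Γ(2)`. -/
theorem gamma_two_image_free :
    ∀ (A B : SL2Z), (A : Matrix (Fin 2) (Fin 2) ℤ) = !![1, 2; 0, 1] →
    (B : Matrix (Fin 2) (Fin 2) ℤ) = !![1, 0; 2, 1] →
    Function.Injective
      (FreeGroup.lift (fun b : Bool =>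
        if b then (QuotientGroup.mk' (Subgroup.center SL2Z)) A
        else (QuotientGroup.mk' (Subgroup.center SL2Z)) B)) ∧
    (FreeGroup.lift (fun b : Bool =>
        if b then (QuotientGroup.mk' (Subgroup.center SL2Z)) A
        else (QuotientGroup.mk' (Subgroup.center SL2Z)) B)).range =
      (CongruenceSubgroup.Gamma 2).map (QuotientGroup.mk' (Subgroup.center SL2Z)) := by
  intro A B hA hB
  obtain rfl : A = GammaTwo.A := Subtype.ext (hA.trans GammaTwo.coe_A.symm)
  obtain rfl : B = GammaTwo.B := Subtype.ext (hB.trans GammaTwo.coe_B.symm)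
  refine ⟨ProjectiveSpecialLinearGroup.lift_transvection_injective (by norm_num), ?_⟩
  have hneg : QuotientGroup.mk' (Subgroup.center SL2Z) (-1) = 1 :=
    (QuotientGroup.eq_one_iff _).mpr (Subgroup.mem_center_iff.mpr fun g => by simp)
  rw [FreeGroup.range_lift_eq_closure, GammaTwo.Gamma_two_eq_closure, MonoidHom.map_closure,
    Set.image_insert_eq, hneg, Subgroup.closure_insert_one, Set.image_pair]
  congr 1
  ext x
  simp [or_comm]
end

section
/- Let G be the free group on two generators A, B, and Φ_N the kernel of the homomorphism G → (ℤ/Nℤ)² with A↦(1,0), B↦(0,1). The map from Φ_N\G to (Φ_N\G/⟨A⟩) × (Φ_N\G/⟨B⟩) sending the coset Φ_N g to the pair (Φ_N g⟨A⟩, Φ_N g⟨B⟩) is a bijection. -/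
/-- The kernel `Φ_N` of the homomorphism from the free group on two generators `A`, `B`
to `(ℤ/Nℤ)²` with `A ↦ (1,0)`, `B ↦ (0,1)`. -/
def phiN (N : ℕ) : Subgroup (FreeGroup Bool) :=
  (FreeGroup.lift (fun b : Bool =>
    if b then (Multiplicative.ofAdd ((1, 0) : ZMod N × ZMod N))
    else (Multiplicative.ofAdd ((0, 1) : ZMod N × ZMod N)))).ker

/-- The homomorphism whose kernel is `phiN`. -/
abbrev fmapN (N : ℕ) : FreeGroup Bool →* Multiplicative (ZMod N × ZMod N) :=
  FreeGroup.lift (fun b : Bool =>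
    if b then (Multiplicative.ofAdd ((1, 0) : ZMod N × ZMod N))
    else (Multiplicative.ofAdd ((0, 1) : ZMod N × ZMod N)))

lemma mem_phiN {N : ℕ} {g : FreeGroup Bool} : g ∈ phiN N ↔ fmapN N g = 1 := Iff.rfl

lemma fmapN_true (N : ℕ) (m : ℤ) :
    fmapN N ((FreeGroup.of true) ^ m) = Multiplicative.ofAdd ((m : ZMod N), 0) := by
  simp [← ofAdd_zsmul, Prod.smul_mk]

lemma fmapN_false (N : ℕ) (m : ℤ) :
    fmapN N ((FreeGroup.of false) ^ m) = Multiplicative.ofAdd (0, (m : ZMod N)) := by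
  simp [← ofAdd_zsmul, Prod.smul_mk]

/-- If images agree in the second coordinate, the `⟨A⟩`-double cosets agree. -/
lemma dosetA_of_snd {N : ℕ} {x g : FreeGroup Bool}
    (h : (Multiplicative.toAdd (fmapN N x)).2 = (Multiplicative.toAdd (fmapN N g)).2) :
    DoubleCoset.mk (phiN N) (Subgroup.zpowers (FreeGroup.of true)) x =
      DoubleCoset.mk (phiN N) (Subgroup.zpowers (FreeGroup.of true)) g := by
  obtain ⟨m, hm⟩ := ZMod.intCast_surjective
    ((Multiplicative.toAdd (fmapN N g)).1 - (Multiplicative.toAdd (fmapN N x)).1)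
  rw [DoubleCoset.eq]
  set P := Multiplicative.toAdd (fmapN N x) with hP
  set Q := Multiplicative.toAdd (fmapN N g) with hQ
  refine ⟨g * (x * (FreeGroup.of true) ^ m)⁻¹, ?_, (FreeGroup.of true) ^ m,
    Subgroup.zpow_mem _ (Subgroup.mem_zpowers _) m, by group⟩
  rw [mem_phiN, map_mul, map_inv, map_mul, fmapN_true, hm]
  show Multiplicative.ofAdd Q * (Multiplicative.ofAdd P *
      Multiplicative.ofAdd ((Q.1 - P.1, 0) : ZMod N × ZMod N))⁻¹ = 1
  rw [← ofAdd_add, ← ofAdd_neg, ← ofAdd_add, ofAdd_eq_one, Prod.ext_iff]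
  constructor
  · simp only [Prod.fst_add, Prod.fst_neg, Prod.fst_zero]; ring
  · simp only [Prod.snd_add, Prod.snd_neg, Prod.snd_zero, h]; ring

/-- If images agree in the first coordinate, the `⟨B⟩`-double cosets agree. -/
lemma dosetB_of_fst {N : ℕ} {x g : FreeGroup Bool}
    (h : (Multiplicative.toAdd (fmapN N x)).1 = (Multiplicative.toAdd (fmapN N g)).1) :
    DoubleCoset.mk (phiN N) (Subgroup.zpowers (FreeGroup.of false)) x =
      DoubleCoset.mk (phiN N) (Subgroup.zpowers (FreeGroup.of false)) g := by
  obtain ⟨m, hm⟩ := ZMod.intCast_surjective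
    ((Multiplicative.toAdd (fmapN N g)).2 - (Multiplicative.toAdd (fmapN N x)).2)
  rw [DoubleCoset.eq]
  set P := Multiplicative.toAdd (fmapN N x) with hP
  set Q := Multiplicative.toAdd (fmapN N g) with hQ
  refine ⟨g * (x * (FreeGroup.of false) ^ m)⁻¹, ?_, (FreeGroup.of false) ^ m,
    Subgroup.zpow_mem _ (Subgroup.mem_zpowers _) m, by group⟩
  rw [mem_phiN, map_mul, map_inv, map_mul, fmapN_false, hm]
  show Multiplicative.ofAdd Q * (Multiplicative.ofAdd P *
      Multiplicative.ofAdd ((0, Q.2 - P.2) : ZMod N × ZMod N))⁻¹ = 1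
  rw [← ofAdd_add, ← ofAdd_neg, ← ofAdd_add, ofAdd_eq_one, Prod.ext_iff]
  constructor
  · simp only [Prod.fst_add, Prod.fst_neg, Prod.fst_zero, h]; ring
  · simp only [Prod.snd_add, Prod.snd_neg, Prod.snd_zero]; ring

/-- Conversely, equal `⟨A⟩`-double cosets give equal second coordinates. -/
lemma snd_of_dosetA {N : ℕ} {g h : FreeGroup Bool}
    (H : DoubleCoset.mk (phiN N) (Subgroup.zpowers (FreeGroup.of true)) g =
      DoubleCoset.mk (phiN N) (Subgroup.zpowers (FreeGroup.of true)) h) :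
    (Multiplicative.toAdd (fmapN N g)).2 = (Multiplicative.toAdd (fmapN N h)).2 := by
  rw [DoubleCoset.eq] at H
  obtain ⟨a, ha, k, hk, rfl⟩ := H
  obtain ⟨m, rfl⟩ := Subgroup.mem_zpowers_iff.mp hk
  rw [mem_phiN] at ha
  have key : fmapN N (a * g * (FreeGroup.of true) ^ m)
      = fmapN N g * Multiplicative.ofAdd (((m : ZMod N), 0) : ZMod N × ZMod N) := by
    rw [map_mul, map_mul, ha, one_mul, fmapN_true]
  rw [key, toAdd_mul]
  simp

/-- Conversely, equal `⟨B⟩`-double cosets give equal first coordinates. -/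
lemma fst_of_dosetB {N : ℕ} {g h : FreeGroup Bool}
    (H : DoubleCoset.mk (phiN N) (Subgroup.zpowers (FreeGroup.of false)) g =
      DoubleCoset.mk (phiN N) (Subgroup.zpowers (FreeGroup.of false)) h) :
    (Multiplicative.toAdd (fmapN N g)).1 = (Multiplicative.toAdd (fmapN N h)).1 := by
  rw [DoubleCoset.eq] at H
  obtain ⟨a, ha, k, hk, rfl⟩ := H
  obtain ⟨m, rfl⟩ := Subgroup.mem_zpowers_iff.mp hk
  rw [mem_phiN] at ha
  have key : fmapN N (a * g * (FreeGroup.of false) ^ m)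
      = fmapN N g * Multiplicative.ofAdd ((0, (m : ZMod N)) : ZMod N × ZMod N) := by
    rw [map_mul, map_mul, ha, one_mul, fmapN_false]
  rw [key, toAdd_mul]
  simp

/-- The map from the coset space `Φ_N \ G` (identified with `G ⧸ Φ_N` since `Φ_N` is normal)
to `(Φ_N \ G / ⟨A⟩) × (Φ_N \ G / ⟨B⟩)` sending the coset of `g` to the pair of double cosets
`(Φ_N g ⟨A⟩, Φ_N g ⟨B⟩)` is a bijection: it separates cosets, and every pair of double cosets
is attained by a common element. -/
theorem phiN_doset_bijection (N : ℕ) (hN : 0 < N) :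
    (∀ g h : FreeGroup Bool,
      ((DoubleCoset.mk (phiN N) (Subgroup.zpowers (FreeGroup.of true)) g =
          DoubleCoset.mk (phiN N) (Subgroup.zpowers (FreeGroup.of true)) h) ∧
        (DoubleCoset.mk (phiN N) (Subgroup.zpowers (FreeGroup.of false)) g =
          DoubleCoset.mk (phiN N) (Subgroup.zpowers (FreeGroup.of false)) h)) ↔
        (QuotientGroup.mk g : FreeGroup Bool ⧸ phiN N) = QuotientGroup.mk h) ∧
    (∀ (dA : DoubleCoset.Quotient ((phiN N : Subgroup (FreeGroup Bool)) : Set (FreeGroup Bool))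
          ((Subgroup.zpowers (FreeGroup.of true) : Subgroup (FreeGroup Bool)) : Set (FreeGroup Bool)))
       (dB : DoubleCoset.Quotient ((phiN N : Subgroup (FreeGroup Bool)) : Set (FreeGroup Bool))
          ((Subgroup.zpowers (FreeGroup.of false) : Subgroup (FreeGroup Bool)) : Set (FreeGroup Bool))),
      ∃ g : FreeGroup Bool,
        DoubleCoset.mk (phiN N) (Subgroup.zpowers (FreeGroup.of true)) g = dA ∧
        DoubleCoset.mk (phiN N) (Subgroup.zpowers (FreeGroup.of false)) g = dB) := by
  constructor
  · intro g h
    constructor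
    · rintro ⟨hA, hB⟩
      have h2 := snd_of_dosetA hA
      have h1 := fst_of_dosetB hB
      have hfg : fmapN N g = fmapN N h := by
        have : Multiplicative.toAdd (fmapN N g) = Multiplicative.toAdd (fmapN N h) :=
          Prod.ext h1 h2
        exact this
      rw [QuotientGroup.eq]
      rw [mem_phiN, map_mul, map_inv, hfg]
      group
    · intro H
      rw [QuotientGroup.eq, mem_phiN, map_mul, map_inv] at H
      have hfg : fmapN N g = fmapN N h := inv_mul_eq_one.mp H
      constructor
      · exact dosetA_of_snd (by rw [hfg])
      · exact dosetB_of_fst (by rw [hfg])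
  · intro dA dB
    set g := Quotient.out dA with hg
    set h := Quotient.out dB with hh
    obtain ⟨c, hc⟩ := ZMod.intCast_surjective ((Multiplicative.toAdd (fmapN N h)).1)
    obtain ⟨d, hd⟩ := ZMod.intCast_surjective ((Multiplicative.toAdd (fmapN N g)).2)
    refine ⟨(FreeGroup.of true) ^ c * (FreeGroup.of false) ^ d, ?_, ?_⟩
    · rw [← DoubleCoset.out_eq' _ _ dA]
      apply dosetA_of_snd
      rw [map_mul, fmapN_true, fmapN_false, toAdd_mul]
      simpa using hd
    · rw [← DoubleCoset.out_eq' _ _ dB]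
      apply dosetB_of_fst
      rw [map_mul, fmapN_true, fmapN_false, toAdd_mul]
      simpa using hc
end

section
/- Let N ≥ 1 and consider the ℤ/Nℤ-module map θ⁺ : (ℤ/Nℤ)[X ⊔ Y]⁰ → (ℤ/Nℤ)[X × Y] where X and Y are sets of cardinality N, defined on degree-zero divisors by sending [x] − [y] (for x ∈ X, y ∈ Y) to Σ_{y'∈Y} [(x,y')] − Σ_{x'∈X} [(x',y)]. If X = {a_0,…,a_{N−1}} and Y = {c_0,…,c_{N−1}}, then the kernel of θ⁺ is the cyclic submodule generated by Σ_{j=0}^{N−1}([a_j] − [c_j]). -/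
open Finsupp

/-- The `ℤ/Nℤ`-linear map `θ⁺` on divisors: `[x] ↦ Σ_{y'} [(x,y')]` for `x ∈ X` and
`[y] ↦ Σ_{x'} [(x',y)]` for `y ∈ Y` (so that `[x] − [y] ↦ Σ_{y'}[(x,y')] − Σ_{x'}[(x',y)]`). -/
noncomputable def thetaPlus (N : ℕ) :
    ((Fin N ⊕ Fin N) →₀ ZMod N) →ₗ[ZMod N] ((Fin N × Fin N) →₀ ZMod N) :=
  Finsupp.linearCombination (ZMod N)
    (Sum.elim (fun x : Fin N => ∑ y : Fin N, Finsupp.single (x, y) (1 : ZMod N))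
      (fun y : Fin N => ∑ x : Fin N, Finsupp.single (x, y) (1 : ZMod N)))

lemma thetaPlus_eval (N : ℕ) (D : (Fin N ⊕ Fin N) →₀ ZMod N) (x y : Fin N) :
    (thetaPlus N D) (x, y) = D (Sum.inl x) + D (Sum.inr y) := by
  rw [thetaPlus, Finsupp.linearCombination_apply,
    Finsupp.sum_fintype _ _ (fun s => by simp)]
  rw [Fintype.sum_sum_type]
  simp [Finsupp.finset_sum_apply, Finsupp.single_apply, Prod.ext_iff, ite_and, mul_ite, mul_one, mul_zero,
    Finset.sum_ite_eq', Finset.sum_ite_eq]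

/-- The kernel of `θ⁺` on degree-zero divisors is the cyclic submodule generated by
`Σ_j ([a_j] − [c_j])` (with `X = {a_j}` indexed by `Sum.inl` and `Y = {c_j}` by `Sum.inr`). -/
theorem thetaPlus_kernel (N : ℕ) (hN : 1 ≤ N)
    (D : (Fin N ⊕ Fin N) →₀ ZMod N) (hdeg : ∑ s : Fin N ⊕ Fin N, D s = 0) :
    thetaPlus N D = 0 ↔
      ∃ t : ZMod N, D = t • ∑ j : Fin N,
        (Finsupp.single (Sum.inl j) (1 : ZMod N) - Finsupp.single (Sum.inr j) 1) := by
  have key : ∀ (t : ZMod N) (s : Fin N ⊕ Fin N),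
      ((t • ∑ j : Fin N, (Finsupp.single (Sum.inl j) (1 : ZMod N)
        - Finsupp.single (Sum.inr j) 1) : (Fin N ⊕ Fin N) →₀ ZMod N)) s
        = Sum.elim (fun _ => t) (fun _ => -t) s := by
    intro t s
    cases s with
    | inl x =>
      simp [Finsupp.finset_sum_apply, Finsupp.single_apply, Finset.sum_ite_eq']
    | inr y =>
      simp [Finsupp.finset_sum_apply, Finsupp.single_apply, Finset.sum_ite_eq']
  constructor
  · intro h
    have h' : ∀ x y : Fin N, D (Sum.inl x) + D (Sum.inr y) = 0 := by
      intro x y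
      rw [← thetaPlus_eval, h]; rfl
    have : NeZero N := ⟨Nat.one_le_iff_ne_zero.mp hN⟩
    refine ⟨D (Sum.inl ⟨0, hN⟩), ?_⟩
    ext s
    rw [key]
    cases s with
    | inl x =>
      have h1 := h' x ⟨0, hN⟩
      have h2 := h' ⟨0, hN⟩ ⟨0, hN⟩
      simp only [Sum.elim_inl]
      linear_combination h1 - h2
    | inr y =>
      have h1 := h' ⟨0, hN⟩ y
      simp only [Sum.elim_inr]
      linear_combination h1
  · rintro ⟨t, rfl⟩
    ext ⟨x, y⟩
    rw [thetaPlus_eval, key, key]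
    simp
end
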